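/- arXiv:2111.13427 — 4 statements merged into one kernel-verified Lean document; each statement's English description precedes it below -/
import Mathlib

section
/- Let G be a group acting acylindrically by isometries on a proper metric space X. Then either X is bounded or the action of G is metrically proper. -/
/-! Fix `x₀` and `R`, and pick `y` at distance at least the acylindricity constant `R₀(ε)` from `x₀`,
where `ε ≥ 2R`. For `g` with `d(g x₀, x₀) ≤ R` the points `g y` stay in a ball around `x₀`, which is
compact, so it is covered by finitely many `ε/2`-balls. If `g` and `h` land in the same small ball,
then `h⁻¹ g` moves `x₀` by at most `2R` and `y` by less than `ε`; by acylindricity only finitely many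
`g` fit with a given `h`, so there are only finitely many `g` in total. -/

open Metric

theorem Set.Finite.of_totallyBounded_image {α X : Type*} [PseudoMetricSpace X] {f : α → X}
    {S : Set α} {δ : ℝ} (hδ : 0 < δ) (hS : TotallyBounded (f '' S))
    (hnear : ∀ a ∈ S, {b ∈ S | dist (f b) (f a) < δ}.Finite) : S.Finite := by
  obtain ⟨t, ht, hcover⟩ := totallyBounded_iff.1 hS (δ / 2) (half_pos hδ)
  have hpiece : ∀ c ∈ t, {b ∈ S | f b ∈ ball c (δ / 2)}.Finite := by
    intro c _
    rcases Set.eq_empty_or_nonempty {b ∈ S | f b ∈ ball c (δ / 2)} with hempty | ⟨a, ha, hac⟩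
    · rw [hempty]; exact Set.finite_empty
    refine (hnear a ha).subset fun b ⟨hb, hbc⟩ => ⟨hb, ?_⟩
    calc dist (f b) (f a) ≤ dist (f b) c + dist (f a) c := dist_triangle_right _ _ _
      _ < δ / 2 + δ / 2 := add_lt_add (mem_ball.1 hbc) (mem_ball.1 hac)
      _ = δ := add_halves δ
  refine (ht.biUnion hpiece).subset fun b hb => ?_
  obtain ⟨c, hc, hbc⟩ := Set.mem_iUnion₂.1 (hcover (Set.mem_image_of_mem f hb))
  exact Set.mem_iUnion₂.2 ⟨c, hc, hb, hbc⟩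

theorem exists_le_dist_of_not_isBounded_univ {X : Type*} [PseudoMetricSpace X]
    (hX : ¬Bornology.IsBounded (Set.univ : Set X)) (x : X) (R : ℝ) : ∃ y, R ≤ dist x y := by
  by_contra! hfar
  exact hX (isBounded_closedBall.subset fun y _ => mem_closedBall'.2 (hfar y).le)

section IsometricAction

variable {G X : Type*} [Group G] [PseudoMetricSpace X] [MulAction G X] [IsIsometricSMul G X]

theorem dist_inv_mul_smul (g h : G) (x : X) : dist ((h⁻¹ * g) • x) x = dist (g • x) (h • x) := by
  rw [← dist_smul h, smul_smul, mul_inv_cancel_left]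

theorem Set.Finite.setOf_dist_smul_le_dist_smul_le {x y : X} {ε : ℝ}
    (hfin : {k : G | dist (k • x) x ≤ ε ∧ dist (k • y) y ≤ ε}.Finite) (h : G) :
    {g : G | dist (g • x) (h • x) ≤ ε ∧ dist (g • y) (h • y) ≤ ε}.Finite := by
  have hpre : {g : G | dist (g • x) (h • x) ≤ ε ∧ dist (g • y) (h • y) ≤ ε} =
      (h⁻¹ * ·) ⁻¹' {k : G | dist (k • x) x ≤ ε ∧ dist (k • y) y ≤ ε} := by
    ext g
    simp only [Set.mem_preimage, Set.mem_ofPred_eq, dist_inv_mul_smul]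
  rw [hpre]
  exact hfin.preimage (mul_right_injective h⁻¹).injOn

theorem Set.Finite.setOf_dist_smul_le [ProperSpace X] {x y : X} {R ε : ℝ} (hε : 0 < ε)
    (hRε : 2 * R ≤ ε) (hfin : {k : G | dist (k • x) x ≤ ε ∧ dist (k • y) y ≤ ε}.Finite) :
    {g : G | dist (g • x) x ≤ R}.Finite := by
  refine Set.Finite.of_totallyBounded_image (f := (· • y)) hε ?_ fun h hh => ?_
  · refine (isCompact_closedBall x (dist y x + R)).totallyBounded.subset ?_
    rintro _ ⟨g, hg, rfl⟩
    calc dist (g • y) x ≤ dist (g • y) (g • x) + dist (g • x) x := dist_triangle _ _ _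
      _ ≤ dist y x + R := by rw [dist_smul]; exact add_le_add_right hg _
  refine (hfin.setOf_dist_smul_le_dist_smul_le h).subset fun g ⟨hg, hgh⟩ => ⟨?_, hgh.le⟩
  calc dist (g • x) (h • x) ≤ dist (g • x) x + dist (h • x) x := dist_triangle_right _ _ _
    _ ≤ ε := by linarith [hg.out, hh.out]

end IsometricAction

/-- An acylindrical isometric action on a proper metric space is metrically proper
unless the space is bounded. -/
theorem stmt9 {G X : Type*} [Group G] [MetricSpace X] [ProperSpace X] [MulAction G X]
    (hiso : ∀ (g : G) (x y : X), dist (g • x) (g • y) = dist x y)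
    (hacyl : ∀ ε : ℝ, 0 ≤ ε → ∃ R : ℝ, ∃ N : ℕ, ∀ x y : X, R ≤ dist x y →
      {g : G | dist (g • x) x ≤ ε ∧ dist (g • y) y ≤ ε}.Finite ∧
      {g : G | dist (g • x) x ≤ ε ∧ dist (g • y) y ≤ ε}.ncard ≤ N) :
    Bornology.IsBounded (Set.univ : Set X) ∨
      ∀ (x₀ : X) (R : ℝ), {g : G | dist (g • x₀) x₀ ≤ R}.Finite := by
  have : IsIsometricSMul G X := ⟨fun g => Isometry.of_dist_eq (hiso g)⟩
  refine or_iff_not_imp_left.2 fun hunbounded x₀ R => ?_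
  have hε : (0 : ℝ) < max (2 * R) 1 := lt_max_of_lt_right one_pos
  obtain ⟨R₀, _, hR₀⟩ := hacyl _ hε.le
  obtain ⟨y, hy⟩ := exists_le_dist_of_not_isBounded_univ hunbounded x₀ R₀
  exact Set.Finite.setOf_dist_smul_le hε (le_max_left _ _) (hR₀ x₀ y hy).1
end

section
/- Let G be a group acting by graph automorphisms on a connected graph Γ with all vertex degrees bounded above by c (path metric). If the action is acylindrical and Γ is unbounded, then there is a uniform bound on the size of all vertex stabilisers. -/
/-!
Take `ε = 0` in acylindricity, giving `R` and `N`. Since `Γ` is connected and unbounded, every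
vertex `v` has a vertex `w` at distance exactly `R`. The stabiliser of `v` permutes the ball of
radius `R` about `v`, which has at most `(c + 1) ^ R` vertices, so the orbit of `w` under it is
that small; the stabiliser of `w` inside it fixes both `v` and `w`, so it has at most `N`
elements. Orbit–stabiliser bounds the stabiliser of `v` by `(c + 1) ^ R * N`.
-/

namespace SimpleGraph

variable {V V' : Type*} {G : SimpleGraph V} {G' : SimpleGraph V'}

theorem Reachable.dist_map_le (f : G →g G') {u v : V} (h : G.Reachable u v) :
    G'.dist (f u) (f v) ≤ G.dist u v := by
  obtain ⟨p, hp⟩ := h.exists_walk_length_eq_dist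
  simpa [hp] using G'.dist_le (p.map f)

theorem Iso.dist_eq (f : G ≃g G') (u v : V) : G'.dist (f u) (f v) = G.dist u v := by
  by_cases h : G.Reachable u v
  · refine le_antisymm (h.dist_map_le f.toHom) ?_
    simpa using (Iso.reachable_iff.2 h : G'.Reachable (f u) (f v)).dist_map_le f.symm.toHom
  · rw [dist_eq_zero_of_not_reachable h,
      dist_eq_zero_of_not_reachable (mt Iso.reachable_iff.1 h)]

theorem Reachable.exists_dist_eq_of_le {v z : V} (h : G.Reachable v z) {n : ℕ}
    (hn : n ≤ G.dist v z) : ∃ w, G.dist v w = n := by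
  obtain ⟨p, hp⟩ := h.exists_walk_length_eq_dist
  have hprefix : G.dist v (p.getVert n) ≤ n :=
    (G.dist_le (p.take n)).trans (by simp)
  have hsuffix : G.dist (p.getVert n) z ≤ p.length - n := by
    simpa using G.dist_le (p.drop n)
  have htri := (p.take n).reachable.dist_triangle_left z
  exact ⟨p.getVert n, by omega⟩

theorem Connected.exists_dist_eq (hconn : G.Connected)
    (hunbdd : ∀ n : ℕ, ∃ x y : V, n ≤ G.dist x y) (v : V) (n : ℕ) : ∃ w, G.dist v w = n := by
  obtain ⟨x, y, hxy⟩ := hunbdd (2 * n)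
  have htri : G.dist x y ≤ G.dist x v + G.dist v y := hconn.dist_triangle
  rw [dist_comm (u := x) (v := v)] at htri
  rcases le_total n (G.dist v x) with hx | hx
  · exact (hconn v x).exists_dist_eq_of_le hx
  · exact (hconn v y).exists_dist_eq_of_le (by omega)

theorem exists_dist_le_and_eq_or_adj_of_dist_le_succ {v w : V} {R : ℕ}
    (h : G.dist v w ≤ R + 1) : ∃ u, G.dist v u ≤ R ∧ (u = w ∨ G.Adj u w) := by
  rcases h.lt_or_eq with h | h
  · exact ⟨w, Nat.lt_succ_iff.mp h, .inl rfl⟩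
  obtain ⟨p, hp⟩ :=
    (Reachable.of_dist_ne_zero (h.trans_ne R.succ_ne_zero)).exists_walk_length_eq_dist
  refine ⟨p.penultimate, ?_, .inr (p.adj_penultimate ?_)⟩
  · simpa [hp, h] using G.dist_le p.dropLast
  · rw [← Walk.length_eq_zero_iff]; omega

theorem Connected.exists_finset_card_le_and_setOf_dist_le_subset {c : ℕ} (hconn : G.Connected)
    (hfin : ∀ v, (G.neighborSet v).Finite) (hc : ∀ v, (G.neighborSet v).ncard ≤ c) (v : V) :
    ∀ R : ℕ, ∃ T : Finset V, T.card ≤ (c + 1) ^ R ∧ {w | G.dist v w ≤ R} ⊆ T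
  | 0 => ⟨{v}, by simp, fun w hw => by simp_all [hconn.dist_eq_zero_iff, eq_comm]⟩
  | R + 1 => by
    classical
    obtain ⟨T, hcard, hT⟩ := hconn.exists_finset_card_le_and_setOf_dist_le_subset hfin hc v R
    let closedNbhd (u : V) : Finset V := insert u (hfin u).toFinset
    have hclosed (u : V) : (closedNbhd u).card ≤ c + 1 := (Finset.card_insert_le _ _).trans <| by
      rw [← Set.ncard_eq_toFinset_card _ (hfin u)]; exact Nat.succ_le_succ (hc u)
    refine ⟨T.biUnion closedNbhd, ?_, fun w hw => ?_⟩
    · calc (T.biUnion closedNbhd).card ≤ ∑ u ∈ T, (closedNbhd u).card := Finset.card_biUnion_le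
        _ ≤ ∑ _u ∈ T, (c + 1) := Finset.sum_le_sum fun u _ => hclosed u
        _ ≤ (c + 1) ^ (R + 1) := by rw [Finset.sum_const, smul_eq_mul, pow_succ]; gcongr
    · obtain ⟨u, hu, hw⟩ := exists_dist_le_and_eq_or_adj_of_dist_le_succ hw
      exact Finset.mem_biUnion.2 ⟨u, hT hu, by aesop⟩

end SimpleGraph

open MulAction in
theorem MulAction.finite_setOf_smul_eq_and_ncard_le {G X : Type*} [Group G] [MulAction G X]
    {v w : X} {T : Finset X} {b : ℕ} (hmaps : ∀ g : G, g • v = v → g • w ∈ T)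
    (hfix : {g : G | g • v = v ∧ g • w = w}.Finite)
    (hb : {g : G | g • v = v ∧ g • w = w}.ncard ≤ b) :
    {g : G | g • v = v}.Finite ∧ {g : G | g • v = v}.ncard ≤ T.card * b := by
  set H := stabilizer G v
  have horbit : orbit H w ⊆ T := by
    rintro _ ⟨g, rfl⟩
    exact hmaps g g.2
  have horbit_fin : (orbit H w).Finite := T.finite_toSet.subset horbit
  have := hfix.to_subtype
  let toFix : stabilizer H w → {g : G | g • v = v ∧ g • w = w} := fun g => ⟨g.1.1, g.1.2, g.2⟩
  have htoFix : Function.Injective toFix := fun g h hgh => by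
    ext; simpa [toFix] using congrArg Subtype.val hgh
  have hstab_fin : Finite (stabilizer H w) := Finite.of_injective toFix htoFix
  have hcard : Nat.card H = Nat.card (stabilizer H w) * (orbit H w).ncard := by
    rw [← index_stabilizer, Subgroup.card_mul_index]
  have hH : Nat.card H ≠ 0 := by
    rw [hcard]
    exact mul_ne_zero Nat.card_pos.ne' ((Set.ncard_pos horbit_fin).2 ⟨w, mem_orbit_self w⟩).ne'
  refine ⟨Set.finite_coe_iff.mp (Nat.finite_of_card_ne_zero hH), ?_⟩
  calc {g : G | g • v = v}.ncard = Nat.card (stabilizer H w) * (orbit H w).ncard := hcard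
    _ ≤ b * T.card := Nat.mul_le_mul ((Nat.card_le_card_of_injective toFix htoFix).trans hb)
        ((Set.ncard_le_ncard horbit T.finite_toSet).trans (Set.ncard_coe_finset T).le)
    _ = T.card * b := mul_comm _ _

/-- An acylindrical action by automorphisms on an unbounded connected bounded-valence
graph has a uniform bound on the sizes of vertex stabilisers. -/
theorem stmt11 {G V : Type*} [Group G] [MulAction G V]
    (Γ : SimpleGraph V) (hconn : Γ.Connected)
    (c : ℕ) (hdeg : ∀ v : V, (Γ.neighborSet v).Finite ∧ (Γ.neighborSet v).ncard ≤ c)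
    (hact : ∀ (g : G) (u v : V), Γ.Adj (g • u) (g • v) ↔ Γ.Adj u v)
    (hacyl : ∀ ε : ℕ, ∃ R N : ℕ, ∀ x y : V, R ≤ Γ.dist x y →
      {g : G | Γ.dist (g • x) x ≤ ε ∧ Γ.dist (g • y) y ≤ ε}.Finite ∧
      {g : G | Γ.dist (g • x) x ≤ ε ∧ Γ.dist (g • y) y ≤ ε}.ncard ≤ N)
    (hunbdd : ∀ n : ℕ, ∃ x y : V, n ≤ Γ.dist x y) :
    ∃ B : ℕ, ∀ v : V, {g : G | g • v = v}.Finite ∧ {g : G | g • v = v}.ncard ≤ B := by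
  obtain ⟨R, N, hRN⟩ := hacyl 0
  refine ⟨(c + 1) ^ R * N, fun v => ?_⟩
  obtain ⟨w, hw⟩ := hconn.exists_dist_eq hunbdd v R
  have hfix : {g : G | Γ.dist (g • v) v ≤ 0 ∧ Γ.dist (g • w) w ≤ 0} =
      {g : G | g • v = v ∧ g • w = w} := by
    simp [hconn.dist_eq_zero_iff]
  obtain ⟨hfin, hN⟩ := hfix ▸ hRN v w hw.ge
  obtain ⟨T, hTcard, hT⟩ := hconn.exists_finset_card_le_and_setOf_dist_le_subset
    (fun u => (hdeg u).1) (fun u => (hdeg u).2) v R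
  have hmaps (g : G) (hg : g • v = v) : g • w ∈ T := by
    have hdist : Γ.dist (g • v) (g • w) = Γ.dist v w :=
      SimpleGraph.Iso.dist_eq (⟨MulAction.toPerm g, hact g _ _⟩ : Γ ≃g Γ) v w
    have hgw : Γ.dist v (g • w) = R := by rw [← hw, ← hdist, hg]
    exact hT hgw.le
  obtain ⟨hstab_fin, hstab_card⟩ := MulAction.finite_setOf_smul_eq_and_ncard_le hmaps hfin hN
  exact ⟨hstab_fin, hstab_card.trans (Nat.mul_le_mul_right N hTcard)⟩
end

section
/- Let ℤ² act by isometries on a metric space X and suppose the stable translation length function τ: ℤ² → [0,∞) is a seminorm in the sense that τ(g+h) ≤ τ(g)+τ(h) and τ(ng) = |n|τ(g) for all g, h ∈ ℤ² and n ∈ ℤ. If additionally there does not exist c > 0 with c(|m|+|n|) ≤ τ(m,n) for all (m,n) ∈ ℤ² (e.g., because ℤ² does not quasi-isometrically embed in X), then there is a group homomorphism θ: ℤ² → ℝ with τ(g) = |θ(g)| for all g ∈ ℤ². -/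
set_option maxHeartbeats 1000000 in
/-- A nonnegative subadditive homogeneous function `τ` on `ℤ²` which does not dominate a
multiple of the `l¹` norm is the absolute value of a homomorphism `ℤ² → ℝ`. -/
theorem stmt16 (τ : ℤ × ℤ → ℝ)
    (hnn : ∀ g, 0 ≤ τ g)
    (hsub : ∀ g h : ℤ × ℤ, τ (g + h) ≤ τ g + τ h)
    (hhom : ∀ (n : ℤ) (g : ℤ × ℤ), τ (n • g) = |(n : ℝ)| * τ g)
    (hnoc : ¬∃ c : ℝ, 0 < c ∧ ∀ m n : ℤ, c * (|(m : ℝ)| + |(n : ℝ)|) ≤ τ (m, n)) :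
    ∃ θ : ℤ × ℤ →+ ℝ, ∀ g, τ g = |θ g| := by
  set A := τ (1, 0) with hA
  set B := τ (0, 1) with hB
  have hA0 : 0 ≤ A := hnn _
  have hB0 : 0 ≤ B := hnn _
  have h10 : ∀ m : ℤ, τ (m, 0) = |(m:ℝ)| * A := by
    intro m
    have h : ((m : ℤ), (0:ℤ)) = m • ((1:ℤ), (0:ℤ)) := by simp
    rw [h, hhom]
  have h01 : ∀ n : ℤ, τ (0, n) = |(n:ℝ)| * B := by
    intro n
    have h : ((0:ℤ), (n : ℤ)) = n • ((0:ℤ), (1:ℤ)) := by simp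
    rw [h, hhom]
  have hneg : ∀ g, τ (-g) = τ g := by
    intro g
    have h : -g = (-1 : ℤ) • g := by simp
    rw [h, hhom]; norm_num
  by_cases hA' : A = 0
  · refine ⟨AddMonoidHom.mk' (fun g => (g.2 : ℝ) * B) (by intro x y; simp only [Prod.fst_add, Prod.snd_add]; push_cast; ring), ?_⟩
    rintro ⟨m, n⟩
    have h1 : τ (m, n) ≤ |(n:ℝ)| * B := by
      have h := hsub (m, 0) (0, n)
      have he : ((m:ℤ), (0:ℤ)) + (0, n) = (m, n) := by simp
      rw [he, h10, h01, hA', mul_zero, zero_add] at h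
      exact h
    have h2 : |(n:ℝ)| * B ≤ τ (m, n) := by
      have h := hsub (m, n) (-m, 0)
      have he : ((m:ℤ), (n:ℤ)) + (-m, 0) = ((0:ℤ), n) := by simp
      rw [he, h01, h10, hA', mul_zero, add_zero] at h
      exact h
    simp only [AddMonoidHom.mk'_apply]
    rw [abs_mul, abs_of_nonneg hB0]
    linarith
  by_cases hB' : B = 0
  · refine ⟨AddMonoidHom.mk' (fun g => (g.1 : ℝ) * A) (by intro x y; simp only [Prod.fst_add, Prod.snd_add]; push_cast; ring), ?_⟩
    rintro ⟨m, n⟩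
    have h1 : τ (m, n) ≤ |(m:ℝ)| * A := by
      have h := hsub (m, 0) (0, n)
      have he : ((m:ℤ), (0:ℤ)) + (0, n) = (m, n) := by simp
      rw [he, h10, h01, hB', mul_zero, add_zero] at h
      exact h
    have h2 : |(m:ℝ)| * A ≤ τ (m, n) := by
      have h := hsub (m, n) (0, -n)
      have he : ((m:ℤ), (n:ℤ)) + (0, -n) = ((m:ℤ), (0:ℤ)) := by simp
      rw [he, h10, h01, hB', mul_zero, add_zero] at h
      exact h
    simp only [AddMonoidHom.mk'_apply]
    rw [abs_mul, abs_of_nonneg hA0]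
    linarith
  have hApos : 0 < A := lt_of_le_of_ne hA0 (Ne.symm hA')
  have hBpos : 0 < B := lt_of_le_of_ne hB0 (Ne.symm hB')
  -- Claim: there is a sign s such that τ is arbitrarily small relative to l¹
  -- at points (p, q) with p > 0, s*q > 0.
  have hW : ∃ s : ℝ, (s = 1 ∨ s = -1) ∧ ∀ ε : ℝ, 0 < ε → ∃ p q : ℤ,
      0 < (p:ℝ) ∧ 0 < s * q ∧ τ (p, q) < ε * (p + s * q) := by
    by_contra hcon
    push_neg at hcon
    obtain ⟨ε₁, hε₁, H1⟩ := hcon 1 (Or.inl rfl)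
    obtain ⟨ε₂, hε₂, H2⟩ := hcon (-1) (Or.inr rfl)
    set c := min (min ε₁ ε₂) (min A B) with hc
    have hcpos : 0 < c := by positivity
    have hc1 : c ≤ ε₁ := le_trans (min_le_left _ _) (min_le_left _ _)
    have hc2 : c ≤ ε₂ := le_trans (min_le_left _ _) (min_le_right _ _)
    have hcA : c ≤ A := le_trans (min_le_right _ _) (min_le_left _ _)
    have hcB : c ≤ B := le_trans (min_le_right _ _) (min_le_right _ _)
    have key : ∀ p q : ℤ, 0 < p → c * (|(p:ℝ)| + |(q:ℝ)|) ≤ τ (p, q) := by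
      intro p q hp
      have hpR : 0 < (p:ℝ) := by exact_mod_cast hp
      rcases lt_trichotomy q 0 with hq | hq | hq
      · have hqR : (q:ℝ) < 0 := by exact_mod_cast hq
        have h := H2 p q hpR (by nlinarith)
        have : c * (|(p:ℝ)| + |(q:ℝ)|) ≤ ε₂ * ((p:ℝ) + (-1) * q) := by
          rw [abs_of_pos hpR, abs_of_neg hqR]
          nlinarith
        linarith
      · subst hq
        rw [h10]
        simp only [Int.cast_zero, abs_zero, add_zero]
        have : 0 ≤ |(p:ℝ)| := abs_nonneg _
        nlinarith
      · have hqR : (0:ℝ) < q := by exact_mod_cast hq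
        have h := H1 p q hpR (by nlinarith)
        have : c * (|(p:ℝ)| + |(q:ℝ)|) ≤ ε₁ * ((p:ℝ) + 1 * q) := by
          rw [abs_of_pos hpR, abs_of_pos hqR]
          nlinarith
        linarith
    refine hnoc ⟨c, hcpos, ?_⟩
    intro m n
    rcases lt_trichotomy m 0 with hm | hm | hm
    · have h := key (-m) (-n) (by omega)
      have he : τ (m, n) = τ (-m, -n) := by
        rw [show ((-m : ℤ), (-n:ℤ)) = -(m, n) from rfl, hneg]
      rw [he]
      simpa using h
    · subst hm
      rw [h01]
      simp only [Int.cast_zero, abs_zero, zero_add]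
      have : 0 ≤ |(n:ℝ)| := abs_nonneg _
      nlinarith
    · exact key m n hm
  obtain ⟨s, hs, hWs⟩ := hW
  have hs2 : s * s = 1 := by rcases hs with rfl | rfl <;> norm_num
  have hs1 : |s| = 1 := by rcases hs with rfl | rfl <;> norm_num
  refine ⟨AddMonoidHom.mk' (fun g => (g.1 : ℝ) * A - s * g.2 * B)
    (by intro x y; simp only [Prod.fst_add, Prod.snd_add]; push_cast; ring), ?_⟩
  rintro ⟨m, n⟩
  simp only [AddMonoidHom.mk'_apply]
  set M := (m : ℝ) with hM
  set N := (n : ℝ) with hN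
  set L := |M * A - s * N * B| with hL
  set T := τ (m, n) with hT
  set D := 2 * (A + B) * (A + B) / (A * B) with hD
  have hDpos : 0 < D := by positivity
  set K := 2 * (|M| + |N| + 1) * D with hK
  have hKpos : 0 < K := by positivity
  -- the main estimate, for each ε > 0
  have main : ∀ ε : ℝ, 0 < ε → L ≤ T + ε ∧ T ≤ L + ε := by
    intro ε hε
    set ε' := min (min (A/2) (B/2)) (ε / K) with hε'def
    have hε'pos : 0 < ε' := by positivity
    have hε'A : ε' ≤ A / 2 := le_trans (min_le_left _ _) (min_le_left _ _)
    have hε'B : ε' ≤ B / 2 := le_trans (min_le_left _ _) (min_le_right _ _)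
    have hε'K : ε' * K ≤ ε := by
      have := min_le_right (min (A/2) (B/2)) (ε / K)
      calc ε' * K ≤ (ε / K) * K := by nlinarith
        _ = ε := by field_simp
    obtain ⟨p, q, hp, hq, hpq⟩ := hWs ε' hε'pos
    set P := (p : ℝ) with hP
    set Q := (q : ℝ) with hQ
    have hτpq0 : 0 ≤ τ (p, q) := hnn _
    have hQabs : |Q| = s * Q := by
      rcases hs with rfl | rfl
      · rw [abs_of_pos (by linarith [hq] : (0:ℝ) < Q)]; ring
      · rw [abs_of_neg (by nlinarith [hq] : Q < (0:ℝ))]; ring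
    -- τ (p, 0) ≤ τ (p,q) + τ (0,-q)  and  τ (0, q) ≤ τ (p,q) + τ (-p, 0)
    have habs1 : P * A - s * Q * B ≤ τ (p, q) := by
      have h := hsub (p, q) (0, -q)
      have he : ((p:ℤ), (q:ℤ)) + (0, -q) = ((p:ℤ), (0:ℤ)) := by simp
      rw [he, h10, h01] at h
      rw [abs_of_pos hp] at h
      have : |((-q : ℤ) : ℝ)| = s * Q := by push_cast; rw [abs_neg, hQabs]
      rw [this] at h
      linarith
    have habs2 : s * Q * B - P * A ≤ τ (p, q) := by
      have h := hsub (p, q) (-p, 0)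
      have he : ((p:ℤ), (q:ℤ)) + (-p, 0) = ((0:ℤ), (q:ℤ)) := by simp
      rw [he, h01, h10] at h
      rw [hQabs] at h
      have : |((-p : ℤ) : ℝ)| = P := by push_cast; rw [abs_neg, abs_of_pos hp]
      rw [this] at h
      linarith
    -- comparability of P and s*Q
    have hDAB : D * (A * B) = 2 * (A + B) * (A + B) := by
      rw [hD]; field_simp
    have key1 : P * A ≤ s * Q * (2 * B + A) := by
      have h1 : P * A < s * Q * B + ε' * (P + s * Q) := by linarith
      nlinarith [mul_nonneg (sub_nonneg.mpr hε'A) (by positivity : (0:ℝ) ≤ P + s * Q)]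
    have key2 : s * Q * B ≤ P * (2 * A + B) := by
      have h1 : s * Q * B < P * A + ε' * (P + s * Q) := by linarith
      nlinarith [mul_nonneg (sub_nonneg.mpr hε'B) (by positivity : (0:ℝ) ≤ P + s * Q)]
    have hQD : P + s * Q ≤ s * Q * D := by
      refine le_of_mul_le_mul_right ?_ (show (0:ℝ) < A * B by positivity)
      calc (P + s * Q) * (A * B) ≤ s * Q * (2 * (A + B) * (A + B)) := by
            nlinarith [mul_le_mul_of_nonneg_right key1 hB0, mul_pos hq (mul_pos hApos hApos),
              mul_pos hq (mul_pos hApos hBpos)]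
        _ = s * Q * D * (A * B) := by rw [← hDAB]; ring
    have hPD : P + s * Q ≤ P * D := by
      refine le_of_mul_le_mul_right ?_ (show (0:ℝ) < A * B by positivity)
      calc (P + s * Q) * (A * B) ≤ P * (2 * (A + B) * (A + B)) := by
            nlinarith [mul_le_mul_of_nonneg_right key2 hA0, mul_pos hp (mul_pos hApos hApos),
              mul_pos hp (mul_pos hApos hBpos)]
        _ = P * D * (A * B) := by rw [← hDAB]; ring
    constructor
    · -- lower bound: s*Q*L ≤ s*Q*T + 2|N|τ(p,q)
      have hcomb : ((q * m - n * p : ℤ), (0:ℤ)) = q • ((m:ℤ), (n:ℤ)) + (-(n • ((p:ℤ), (q:ℤ)))) := by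
        simp only [Prod.smul_mk, Prod.neg_mk, Prod.mk_add_mk, smul_eq_mul, Prod.mk.injEq]
        constructor <;> ring
      have h0 := hsub (q • ((m:ℤ), (n:ℤ))) (-(n • ((p:ℤ), (q:ℤ))))
      rw [← hcomb, h10, hneg, hhom, hhom] at h0
      have hcast : |((q * m - n * p : ℤ) : ℝ)| = |Q * M - N * P| := by push_cast; rfl
      have h : |Q * M - N * P| * A ≤ |Q| * T + |N| * τ (p, q) := by
        rw [← hcast]; exact h0
      have hQL : |Q| * L ≤ |Q * M - N * P| * A + |N| * |P * A - s * Q * B| := by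
        have e1 : |Q| * L = |Q * (M * A - s * N * B)| := by rw [abs_mul]
        have e2 : Q * (M * A - s * N * B) = (Q * M - N * P) * A + N * (P * A - s * Q * B) := by
          ring
        rw [e1, e2]
        calc |(Q * M - N * P) * A + N * (P * A - s * Q * B)|
            ≤ |(Q * M - N * P) * A| + |N * (P * A - s * Q * B)| := abs_add_le _ _
          _ = |Q * M - N * P| * A + |N| * |P * A - s * Q * B| := by
              rw [abs_mul, abs_mul, abs_of_pos hApos]
      have habs : |P * A - s * Q * B| ≤ τ (p, q) := abs_le.mpr ⟨by linarith, by linarith⟩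
      have hτsmall : τ (p, q) ≤ ε' * (s * Q) * D := by
        have h4 : ε' * (P + s * Q) ≤ ε' * (s * Q * D) :=
          mul_le_mul_of_nonneg_left hQD hε'pos.le
        linarith [hpq, h4]
      have hfin : s * Q * L ≤ s * Q * (T + 2 * |N| * ε' * D) := by
        have h5 : |Q| * L ≤ |Q| * T + 2 * |N| * τ (p, q) := by
          linarith [hQL, h, mul_le_mul_of_nonneg_left habs (abs_nonneg N)]
        rw [hQabs] at h5
        have h6 : 2 * |N| * τ (p, q) ≤ 2 * |N| * (ε' * (s * Q) * D) :=
          mul_le_mul_of_nonneg_left hτsmall (by positivity)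
        linarith [h5, h6]
      have hLT : L ≤ T + 2 * |N| * ε' * D := le_of_mul_le_mul_left (by
        calc s * Q * L = (s * Q) * L := by ring
          _ ≤ (s * Q) * (T + 2 * |N| * ε' * D) := hfin) hq
      have hfin2 : 2 * |N| * ε' * D ≤ ε := by
        have h2 : 2 * |N| * D ≤ K := by
          rw [hK]; nlinarith [mul_nonneg (by positivity : (0:ℝ) ≤ 2 * (|M| + 1)) hDpos.le]
        linarith [mul_nonneg hε'pos.le (by linarith : (0:ℝ) ≤ K - 2 * |N| * D), hε'K]
      linarith
    · -- upper bound
      have hcomb : p • ((m:ℤ), (n:ℤ)) = m • ((p:ℤ), (q:ℤ)) + ((0:ℤ), (p * n - m * q : ℤ)) := by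
        simp only [Prod.smul_mk, Prod.mk_add_mk, smul_eq_mul, Prod.mk.injEq]
        constructor <;> ring
      have h0 := hsub (m • ((p:ℤ), (q:ℤ))) ((0:ℤ), (p * n - m * q : ℤ))
      rw [← hcomb, hhom, hhom, h01] at h0
      have hcast : |((p * n - m * q : ℤ) : ℝ)| = |P * N - M * Q| := by push_cast; rfl
      have h : |P| * T ≤ |M| * τ (p, q) + |P * N - M * Q| * B := by
        rw [← hcast]; exact h0
      rw [abs_of_pos hp] at h
      have hBpn : |P * N - M * Q| * B ≤ P * L + |M| * |P * A - s * Q * B| := by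
        have e2 : B * (P * N - M * Q) = -s * (P * (M * A - s * N * B)) + s * (M * (P * A - s * Q * B)) := by
          linear_combination (B * M * Q - B * P * N) * hs2
        have e1 : |P * N - M * Q| * B = |B * (P * N - M * Q)| := by
          rw [abs_mul, abs_of_pos hBpos]; ring
        rw [e1, e2]
        calc |(-s) * (P * (M * A - s * N * B)) + s * (M * (P * A - s * Q * B))|
            ≤ |(-s) * (P * (M * A - s * N * B))| + |s * (M * (P * A - s * Q * B))| := abs_add_le _ _
          _ = P * L + |M| * |P * A - s * Q * B| := by
              simp only [abs_mul, abs_neg, hs1, abs_of_pos hp]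
              ring
      have habs : |P * A - s * Q * B| ≤ τ (p, q) := abs_le.mpr ⟨by linarith, by linarith⟩
      have hτsmall : τ (p, q) ≤ ε' * P * D := by
        have h4 : ε' * (P + s * Q) ≤ ε' * (P * D) :=
          mul_le_mul_of_nonneg_left hPD hε'pos.le
        linarith [hpq, h4]
      have hfin : P * T ≤ P * (L + 2 * |M| * ε' * D) := by
        have h7 : |M| * |P * A - s * Q * B| ≤ |M| * τ (p, q) :=
          mul_le_mul_of_nonneg_left habs (abs_nonneg M)
        have h8 : 2 * (|M| * τ (p, q)) ≤ 2 * (|M| * (ε' * P * D)) := by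
          have := mul_le_mul_of_nonneg_left hτsmall (abs_nonneg M); linarith
        linarith [h, hBpn, h7, h8]
      have hTL : T ≤ L + 2 * |M| * ε' * D := le_of_mul_le_mul_left hfin hp
      have hfin2 : 2 * |M| * ε' * D ≤ ε := by
        have h2 : 2 * |M| * D ≤ K := by
          rw [hK]; nlinarith [mul_nonneg (by positivity : (0:ℝ) ≤ 2 * (|N| + 1)) hDpos.le]
        linarith [mul_nonneg hε'pos.le (by linarith : (0:ℝ) ≤ K - 2 * |M| * D), hε'K]
      linarith
  have h1 : T ≤ L := le_of_forall_pos_le_add (fun ε hε => (main ε hε).2)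
  have h2 : L ≤ T := le_of_forall_pos_le_add (fun ε hε => (main ε hε).1)
  have : T = L := le_antisymm h1 h2
  exact this
end

section
/- The 2×2 real matrix M = [[3, −4], [4, 3]] has no real eigenvalue, and for every positive integer K the matrix M^K has no rational eigenvalue; consequently no nonzero integer vector (m,n) is an eigenvector of M^K. -/
/-!
`!![a, -b; b, a]` is multiplication by `a + b i`, so the powers of `M = !![3, -4; 4, 3]` are again
of this shape, `M ^ K = !![c, -d; d, c]` with `c + d i = (3 + 4 i) ^ K ∈ ℤ[i]`. Over an ordered
ring such a matrix has an eigenvector only if `d = 0`, since `(c - μ) ^ 2 + d ^ 2` kills it.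
Finally `d ≢ 0 mod 5`: modulo 5 the matrix `M` is idempotent, so `M ^ K ≡ M` for `K ≥ 1`.
-/

open Matrix

section RotScale

variable {R : Type*} [CommRing R]

def rotScale (a b : R) : Matrix (Fin 2) (Fin 2) R := !![a, -b; b, a]

theorem rotScale_one_zero : rotScale (1 : R) 0 = 1 := by
  ext i j
  fin_cases i <;> fin_cases j <;> simp [rotScale]

theorem rotScale_mul_rotScale (a b c d : R) :
    rotScale a b * rotScale c d = rotScale (a * c - b * d) (a * d + b * c) := by
  ext i j
  fin_cases i <;> fin_cases j <;> simp [rotScale] <;> ring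

theorem map_rotScale {S : Type*} [CommRing S] (f : R →+* S) (a b : R) :
    (rotScale a b).map f = rotScale (f a) (f b) := by
  ext i j
  fin_cases i <;> fin_cases j <;> simp [rotScale]

theorem exists_rotScale_eq_pow (a b : R) (K : ℕ) : ∃ c d : R, rotScale a b ^ K = rotScale c d := by
  induction K with
  | zero => exact ⟨1, 0, by rw [pow_zero, rotScale_one_zero]⟩
  | succ K ih =>
    obtain ⟨c, d, h⟩ := ih
    exact ⟨_, _, by rw [pow_succ, h, rotScale_mul_rotScale]⟩

end RotScale

theorem eq_zero_of_rotScale_mulVec_eq_smul {R : Type*} [CommRing R] [LinearOrder R]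
    [IsStrictOrderedRing R] {a b μ : R} {v : Fin 2 → R} (hb : b ≠ 0)
    (h : rotScale a b *ᵥ v = μ • v) : v = 0 := by
  have h0 : a * v 0 - b * v 1 = μ * v 0 := by
    simpa [rotScale, mulVec, vecHead, vecTail, sub_eq_add_neg] using congrFun h 0
  have h1 : b * v 0 + a * v 1 = μ * v 1 := by
    simpa [rotScale, mulVec, vecHead, vecTail] using congrFun h 1
  have hpos : 0 < b ^ 2 + (a - μ) ^ 2 := by positivity
  have hv0 : (b ^ 2 + (a - μ) ^ 2) * v 0 = 0 := by linear_combination b * h1 + (a - μ) * h0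
  have hv1 : (b ^ 2 + (a - μ) ^ 2) * v 1 = 0 := by linear_combination (a - μ) * h1 - b * h0
  ext i
  fin_cases i
  · exact (mul_eq_zero.1 hv0).resolve_left hpos.ne'
  · exact (mul_eq_zero.1 hv1).resolve_left hpos.ne'

theorem rotScale_three_four_zmod_five_pow {K : ℕ} (hK : K ≠ 0) :
    rotScale (3 : ZMod 5) 4 ^ K = rotScale 3 4 := by
  refine IsIdempotentElem.pow_eq ?_ hK
  rw [IsIdempotentElem, rotScale_mul_rotScale]
  decide

theorem exists_int_rotScale_three_four_pow {K : ℕ} (hK : K ≠ 0) :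
    ∃ c d : ℤ, d ≠ 0 ∧ rotScale (3 : ℤ) 4 ^ K = rotScale c d := by
  obtain ⟨c, d, h⟩ := exists_rotScale_eq_pow (3 : ℤ) 4 K
  refine ⟨c, d, fun hd => ?_, h⟩
  have hmod := congrArg (fun A => A.map (Int.castRingHom (ZMod 5))) h
  simp only [Matrix.map_pow, map_rotScale, hd, map_ofNat, map_zero,
    rotScale_three_four_zmod_five_pow hK] at hmod
  have h10 : (4 : ZMod 5) = 0 := by simpa [rotScale] using congrFun (congrFun hmod 1) 0
  exact absurd h10 (by decide)

theorem exists_rotScale_three_four_pow (R : Type*) [CommRing R] {K : ℕ} (hK : K ≠ 0) :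
    ∃ c d : ℤ, d ≠ 0 ∧ rotScale (3 : R) 4 ^ K = rotScale (c : R) (d : R) := by
  obtain ⟨c, d, hd, h⟩ := exists_int_rotScale_three_four_pow hK
  refine ⟨c, d, hd, ?_⟩
  simpa only [Matrix.map_pow, map_rotScale, map_ofNat, eq_intCast] using
    congrArg (fun A => A.map (Int.castRingHom R)) h

/-- The matrix `[[3,−4],[4,3]]` has no real eigenvalue; its powers have no rational
eigenvalue, so no nonzero integer vector is an eigenvector of any power. -/
theorem stmt17 :
    (¬∃ (μ : ℝ) (v : Fin 2 → ℝ), v ≠ 0 ∧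
      (!![3, -4; 4, 3] : Matrix (Fin 2) (Fin 2) ℝ).mulVec v = μ • v) ∧
    (∀ K : ℕ, 1 ≤ K → ¬∃ (μ : ℚ) (v : Fin 2 → ℚ), v ≠ 0 ∧
      ((!![3, -4; 4, 3] : Matrix (Fin 2) (Fin 2) ℚ) ^ K).mulVec v = μ • v) ∧
    (∀ K : ℕ, 1 ≤ K → ∀ m n : ℤ, ¬(m = 0 ∧ n = 0) →
      ¬∃ μ : ℚ, ((!![3, -4; 4, 3] : Matrix (Fin 2) (Fin 2) ℚ) ^ K).mulVec
        ![(m : ℚ), (n : ℚ)] = μ • ![(m : ℚ), (n : ℚ)]) := by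
  have rational : ∀ K : ℕ, 1 ≤ K → ¬∃ (μ : ℚ) (v : Fin 2 → ℚ), v ≠ 0 ∧
      ((!![3, -4; 4, 3] : Matrix (Fin 2) (Fin 2) ℚ) ^ K).mulVec v = μ • v := by
    rintro K hK ⟨μ, v, hv, h⟩
    obtain ⟨c, d, hd, hpow⟩ := exists_rotScale_three_four_pow ℚ (Nat.one_le_iff_ne_zero.1 hK)
    rw [show (!![3, -4; 4, 3] : Matrix (Fin 2) (Fin 2) ℚ) = rotScale 3 4 from rfl, hpow] at h
    exact hv (eq_zero_of_rotScale_mulVec_eq_smul (Int.cast_ne_zero.2 hd) h)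
  refine ⟨?_, rational, ?_⟩
  · rintro ⟨μ, v, hv, h⟩
    exact hv (eq_zero_of_rotScale_mulVec_eq_smul (a := (3 : ℝ)) four_ne_zero h)
  · rintro K hK m n hmn ⟨μ, h⟩
    refine rational K hK ⟨μ, _, fun h0 => hmn ?_, h⟩
    simpa using congrFun h0
end
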